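/- arXiv:math/0403383 — 4 statements merged into one kernel-verified Lean document; each statement's English description precedes it below -/
import Mathlib

section
/- With the same hypotheses (the natural maps S^i(I/I²) → I^i/I^{i+1} are isomorphisms for all i, d : A → S(I/I²) an algebra homomorphism with d_0 and d_1|_I the natural maps), the induced homomorphism A/I^n → S(I/I²)/J^n is surjective for all n ≥ 1. Consequently A/I^n ≅ S(I/I²)/J^n for all n. -/
/-- The `i`-th graded piece `I^i / I^(i+1)` of the associated graded of an ideal. -/
abbrev Gr {A : Type*} [CommRing A] (I : Ideal A) (i : ℕ) :=
  (↥(I ^ i)) ⧸ (Submodule.comap (I ^ i).subtype (I ^ (i + 1)))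

/-- The natural quotient map `I^i → I^i/I^(i+1)` on an element. -/
def grMk {A : Type*} [CommRing A] (I : Ideal A) (i : ℕ) (a : A) (ha : a ∈ I ^ i) : Gr I i :=
  Submodule.Quotient.mk ⟨a, ha⟩

section Aux

variable {A S : Type*} [CommRing A] [CommRing S] [Algebra A S]
  (𝒜 : ℕ → Submodule A S) [GradedAlgebra 𝒜]


lemma auxJ_mem_iff (y : S) : y ∈ (HomogeneousIdeal.irrelevant 𝒜).toIdeal ↔ DirectSum.decompose 𝒜 y 0 = 0 := by
  rw [HomogeneousIdeal.mem_iff, HomogeneousIdeal.mem_irrelevant_iff, GradedRing.proj_apply,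
    ZeroMemClass.coe_eq_zero]

lemma aux_decompose_add (u v : S) (i : ℕ) :
    DirectSum.decompose 𝒜 (u + v) i =
      DirectSum.decompose 𝒜 u i + DirectSum.decompose 𝒜 v i := by
  rw [DirectSum.decompose_add, DirectSum.add_apply]

lemma aux_mul_low (x y : S) (m : ℕ) (hx : ∀ i < m, DirectSum.decompose 𝒜 x i = 0)
    (hy : DirectSum.decompose 𝒜 y 0 = 0) :
    ∀ i < m + 1, DirectSum.decompose 𝒜 (x * y) i = 0 := by
  classical
  intro i hi
  rw [← ZeroMemClass.coe_eq_zero, DirectSum.decompose_mul, DirectSum.coe_mul_apply]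
  refine Finset.sum_eq_zero ?_
  rintro ⟨a, b⟩ hab
  simp only [Finset.mem_filter, Finset.mem_product, DFinsupp.mem_support_iff] at hab
  obtain ⟨⟨ha, hb⟩, hsum⟩ := hab
  rcases Nat.eq_zero_or_pos b with hb0 | hb1
  · exact absurd (hb0 ▸ hy) hb
  · have : a < m := by omega
    exact absurd (hx a this) ha

lemma aux_mul_top (x y : S) (m : ℕ) (hx : ∀ i < m, DirectSum.decompose 𝒜 x i = 0)
    (hy : DirectSum.decompose 𝒜 y 0 = 0) :
    (DirectSum.decompose 𝒜 (x * y) (m + 1) : S) =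
      (DirectSum.decompose 𝒜 x m : S) * (DirectSum.decompose 𝒜 y 1 : S) := by
  classical
  rw [DirectSum.decompose_mul, DirectSum.coe_mul_apply]
  refine Finset.sum_eq_single (m, 1) ?_ ?_
  · rintro ⟨a, b⟩ hab hne
    simp only [Finset.mem_filter, Finset.mem_product, DFinsupp.mem_support_iff] at hab
    obtain ⟨⟨ha, hb⟩, hsum⟩ := hab
    rcases Nat.eq_zero_or_pos b with hb0 | hb1
    · exact absurd (hb0 ▸ hy) hb
    · rcases Nat.lt_or_ge 1 b with hb2 | hb2
      · have : a < m := by omega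
        exact absurd (hx a this) ha
      · have hb' : b = 1 := by omega
        have ham : a = m := by omega
        exact absurd (by rw [ham, hb']) hne
  · intro h
    by_cases h1 : DirectSum.decompose 𝒜 x m = 0
    · rw [h1]; simp
    by_cases h2 : DirectSum.decompose 𝒜 y 1 = 0
    · rw [h2]; simp
    exact (h (Finset.mem_filter.2 ⟨Finset.mem_product.2
      ⟨DFinsupp.mem_support_iff.2 h1, DFinsupp.mem_support_iff.2 h2⟩, rfl⟩)).elim

lemma auxK (n : ℕ) (s : S) (hs : s ∈ (HomogeneousIdeal.irrelevant 𝒜).toIdeal ^ n) : ∀ i < n, DirectSum.decompose 𝒜 s i = 0 := by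
  induction n generalizing s with
  | zero => intro i hi; omega
  | succ n ih =>
    rw [pow_succ] at hs
    refine Submodule.mul_induction_on hs ?_ ?_
    · intro x hx y hy
      exact aux_mul_low 𝒜 x y n (ih x hx) ((auxJ_mem_iff 𝒜 y).1 hy)
    · intro u v hu hv i hi
      rw [aux_decompose_add, hu i hi, hv i hi, add_zero]

end Aux
section Aux2

variable {A S : Type*} [CommRing A] [CommRing S] [Algebra A S]
  (𝒜 : ℕ → Submodule A S) [GradedAlgebra 𝒜]
  (I : Ideal A) (π : ∀ i, 𝒜 i →ₗ[A] Gr I i)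

lemma auxGrMk_add (i : ℕ) (f g : A) (hf : f ∈ I ^ i) (hg : g ∈ I ^ i) :
    grMk I i (f + g) (add_mem hf hg) = grMk I i f hf + grMk I i g hg := by
  unfold grMk
  rw [← Submodule.Quotient.mk_add]
  rfl

lemma auxGrMk_eq_zero (i : ℕ) (f : A) (hf : f ∈ I ^ i) :
    grMk I i f hf = 0 ↔ f ∈ I ^ (i + 1) := by
  rw [grMk, Submodule.Quotient.mk_eq_zero, Submodule.mem_comap]
  rfl

lemma auxGrMk_surj (i : ℕ) (q : Gr I i) : ∃ f hf, grMk I i f hf = q := by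
  obtain ⟨⟨f, hf⟩, h⟩ := Submodule.Quotient.mk_surjective _ q
  exact ⟨f, hf, h⟩

variable (hbij : ∀ i, Function.Bijective (π i))
  (hπ : ∀ (i j : ℕ) (x : 𝒜 i) (y : 𝒜 j) (f g : A) (hf : f ∈ I ^ i) (hg : g ∈ I ^ j),
      π i x = grMk I i f hf → π j y = grMk I j g hg →
      π (i + j) ⟨(x : S) * (y : S), SetLike.mul_mem_graded x.2 y.2⟩ =
        grMk I (i + j) (f * g) (by rw [pow_add]; exact Ideal.mul_mem_mul hf hg))

include hbij hπ in
lemma auxC : ∀ (i : ℕ) (f : A) (hf : f ∈ I ^ i), ∃ x : 𝒜 i,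
    (x : S) ∈ (HomogeneousIdeal.irrelevant 𝒜).toIdeal ^ i ∧ π i x = grMk I i f hf := by
  intro i
  induction i with
  | zero =>
    intro f hf
    obtain ⟨x, hx⟩ := (hbij 0).2 (grMk I 0 f hf)
    exact ⟨x, by simp [Ideal.one_eq_top], hx⟩
  | succ i ih =>
    intro f hf
    have hf' : f ∈ I ^ i * I := by rwa [← pow_succ]
    revert hf
    refine Submodule.mul_induction_on' (C := fun f hf' => ∀ hf : f ∈ I ^ (i + 1),
      ∃ x : 𝒜 (i + 1), (x : S) ∈ (HomogeneousIdeal.irrelevant 𝒜).toIdeal ^ (i + 1) ∧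
        π (i + 1) x = grMk I (i + 1) f hf) ?_ ?_ hf'
    · intro h hh g hg _
      obtain ⟨y, hyJ, hyπ⟩ := ih h hh
      obtain ⟨x₁, hx₁⟩ := (hbij 1).2 (grMk I 1 g (by simpa using hg))
      have hx₁J : (x₁ : S) ∈ (HomogeneousIdeal.irrelevant 𝒜).toIdeal := by
        rw [auxJ_mem_iff]
        exact Subtype.ext (DirectSum.decompose_of_mem_ne 𝒜 x₁.2 one_ne_zero)
      refine ⟨⟨(y : S) * (x₁ : S), SetLike.mul_mem_graded y.2 x₁.2⟩, ?_, ?_⟩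
      · rw [pow_succ]; exact Ideal.mul_mem_mul hyJ hx₁J
      · exact hπ i 1 y x₁ h g hh (by simpa using hg) hyπ hx₁
    · intro u hu v hv Cu Cv _
      obtain ⟨xu, hxuJ, hxuπ⟩ := Cu (by rw [pow_succ]; exact hu)
      obtain ⟨xv, hxvJ, hxvπ⟩ := Cv (by rw [pow_succ]; exact hv)
      refine ⟨xu + xv, ?_, ?_⟩
      · exact add_mem hxuJ hxvJ
      · rw [map_add, hxuπ, hxvπ]
        exact (auxGrMk_add I (i + 1) u v (by rw [pow_succ]; exact hu)
          (by rw [pow_succ]; exact hv)).symm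

include hbij hπ in
lemma aux𝒜J : ∀ (i : ℕ) (x : 𝒜 i),
    (x : S) ∈ (HomogeneousIdeal.irrelevant 𝒜).toIdeal ^ i := by
  intro i x
  obtain ⟨f, hf, hmk⟩ := auxGrMk_surj I i (π i x)
  obtain ⟨y, hyJ, hyπ⟩ := auxC 𝒜 I π hbij hπ i f hf
  have : y = x := (hbij i).1 (hyπ.trans hmk)
  rwa [this] at hyJ

include hbij hπ in
lemma auxKJ (n : ℕ) (s : S) (h : ∀ i < n, DirectSum.decompose 𝒜 s i = 0) :
    s ∈ (HomogeneousIdeal.irrelevant 𝒜).toIdeal ^ n := by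
  classical
  rw [← DirectSum.sum_support_decompose 𝒜 s]
  refine Submodule.sum_mem _ ?_
  intro i hi
  have hin : n ≤ i := by
    by_contra hc
    exact (DFinsupp.mem_support_iff.1 hi) (h i (by omega))
  exact Ideal.pow_le_pow_right hin (aux𝒜J 𝒜 I π hbij hπ i _)

variable (d : A →+* S)
  (hd0 : ∀ a : A, π 0 (DirectSum.decompose 𝒜 (d a) 0) =
    grMk I 0 a (by simp [Ideal.one_eq_top]))
  (hd1 : ∀ a : A, ∀ ha : a ∈ I, π 1 (DirectSum.decompose 𝒜 (d a) 1) =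
    grMk I 1 a (by simpa using ha))

include hbij hπ hd0 hd1 in
lemma auxL1 : ∀ (m : ℕ) (a : A) (ha : a ∈ I ^ m),
    (∀ i < m, DirectSum.decompose 𝒜 (d a) i = 0) ∧
    π m (DirectSum.decompose 𝒜 (d a) m) = grMk I m a ha := by
  intro m
  induction m with
  | zero =>
    intro a ha
    exact ⟨by omega, hd0 a⟩
  | succ m ih =>
    intro a ha
    have ha' : a ∈ I ^ m * I := by rwa [← pow_succ]
    revert ha
    refine Submodule.mul_induction_on' (C := fun a ha' => ∀ ha : a ∈ I ^ (m + 1),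
      (∀ i < m + 1, DirectSum.decompose 𝒜 (d a) i = 0) ∧
      π (m + 1) (DirectSum.decompose 𝒜 (d a) (m + 1)) = grMk I (m + 1) a ha) ?_ ?_ ha'
    · intro h hh g hg _
      obtain ⟨ih1, ih2⟩ := ih h hh
      have hg0 : DirectSum.decompose 𝒜 (d g) 0 = 0 := by
        apply (hbij 0).1
        rw [map_zero, hd0 g]
        exact (auxGrMk_eq_zero I 0 g (by simp [Ideal.one_eq_top])).2 (by simpa using hg)
      constructor
      · intro i hi
        rw [map_mul]
        exact aux_mul_low 𝒜 (d h) (d g) m ih1 hg0 i hi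
      · have heq : DirectSum.decompose 𝒜 (d (h * g)) (m + 1) =
            ⟨(DirectSum.decompose 𝒜 (d h) m : S) * (DirectSum.decompose 𝒜 (d g) 1 : S),
              SetLike.mul_mem_graded (DirectSum.decompose 𝒜 (d h) m).2
                (DirectSum.decompose 𝒜 (d g) 1).2⟩ := by
          apply Subtype.ext
          rw [map_mul]
          exact aux_mul_top 𝒜 (d h) (d g) m ih1 hg0
        rw [heq]
        exact hπ m 1 _ _ h g hh (by simpa using hg) ih2 (hd1 g hg)
    · intro u hu v hv Cu Cv _
      obtain ⟨Cu1, Cu2⟩ := Cu (by rw [pow_succ]; exact hu)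
      obtain ⟨Cv1, Cv2⟩ := Cv (by rw [pow_succ]; exact hv)
      constructor
      · intro i hi
        rw [map_add, aux_decompose_add, Cu1 i hi, Cv1 i hi, add_zero]
      · rw [map_add, aux_decompose_add, map_add, Cu2, Cv2]
        exact (auxGrMk_add I (m + 1) u v (by rw [pow_succ]; exact hu)
          (by rw [pow_succ]; exact hv)).symm

include hbij hπ hd0 hd1 in
lemma auxSurj : ∀ (m : ℕ) (s : S), ∃ a : A,
    ∀ i < m, DirectSum.decompose 𝒜 (d a - s) i = 0 := by
  intro m s
  induction m with
  | zero => exact ⟨0, by omega⟩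
  | succ m ih =>
    obtain ⟨a, ha⟩ := ih
    obtain ⟨b, hb, hbmk⟩ := auxGrMk_surj I m (π m (DirectSum.decompose 𝒜 (s - d a) m))
    have hL := auxL1 𝒜 I π hbij hπ d hd0 hd1 m b hb
    have hdb : DirectSum.decompose 𝒜 (d b) m = DirectSum.decompose 𝒜 (s - d a) m :=
      (hbij m).1 (by rw [hL.2, hbmk])
    refine ⟨a + b, ?_⟩
    intro i hi
    have hrw : d (a + b) - s = (d a - s) + d b := by rw [map_add]; ring
    rw [hrw, aux_decompose_add]
    rcases Nat.lt_or_ge i m with him | him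
    · rw [ha i him, hL.1 i him, add_zero]
    · have : i = m := by omega
      subst this
      rw [hdb, ← aux_decompose_add]
      have h0 : (d a - s) + (s - d a) = (0 : S) := by ring
      rw [h0]
      simp

include hbij hπ hd0 hd1 in
lemma auxKer : ∀ (n : ℕ) (a : A),
    a ∈ I ^ n ↔ d a ∈ (HomogeneousIdeal.irrelevant 𝒜).toIdeal ^ n := by
  intro n a
  constructor
  · intro ha
    exact auxKJ 𝒜 I π hbij hπ n (d a)
      (fun i hi => (auxL1 𝒜 I π hbij hπ d hd0 hd1 n a ha).1 i hi)
  · intro hda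
    have key : ∀ m, m ≤ n → a ∈ I ^ m := by
      intro m
      induction m with
      | zero => intro _; simp [Ideal.one_eq_top]
      | succ m ihm =>
        intro hm
        have ham := ihm (by omega)
        have h0 : DirectSum.decompose 𝒜 (d a) m = 0 := auxK 𝒜 n (d a) hda m (by omega)
        have h2 := (auxL1 𝒜 I π hbij hπ d hd0 hd1 m a ham).2
        rw [h0, map_zero] at h2
        exact (auxGrMk_eq_zero I m a ham).1 h2.symm
    exact key n le_rfl

end Aux2

/-- with `S` a model of the symmetric algebra `S(I/I²)` (a graded algebra
whose `i`-th piece is identified with `I^i/I^(i+1)` compatibly with multiplication),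
and `d : A → S(I/I²)` an algebra homomorphism with degree zero component the natural
map `A → A/I` and degree one component restricted to `I` the natural map `I → I/I²`,
the induced homomorphism `A/I^n → S/J^n` is surjective for all `n ≥ 1`;
consequently `A/I^n ≅ S/J^n` for all `n ≥ 1`. -/
theorem stmt3 {k A S : Type*} [Field k] [CommRing A] [Algebra k A] [CommRing S]
    [Algebra A S] [Algebra k S] [IsScalarTower k A S]
    (I : Ideal A) (𝒜 : ℕ → Submodule A S) [GradedAlgebra 𝒜]
    (π : ∀ i, 𝒜 i →ₗ[A] Gr I i)
    (hbij : ∀ i, Function.Bijective (π i))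
    (hπ : ∀ (i j : ℕ) (x : 𝒜 i) (y : 𝒜 j) (f g : A) (hf : f ∈ I ^ i) (hg : g ∈ I ^ j),
      π i x = grMk I i f hf → π j y = grMk I j g hg →
      π (i + j) ⟨(x : S) * (y : S), SetLike.mul_mem_graded x.2 y.2⟩ =
        grMk I (i + j) (f * g) (by rw [pow_add]; exact Ideal.mul_mem_mul hf hg))
    (d : A →ₐ[k] S)
    (hd0 : ∀ a : A, π 0 (DirectSum.decompose 𝒜 (d a) 0) =
      grMk I 0 a (by simp [Ideal.one_eq_top]))
    (hd1 : ∀ a : A, ∀ ha : a ∈ I, π 1 (DirectSum.decompose 𝒜 (d a) 1) =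
      grMk I 1 a (by simpa using ha)) :
    (∀ n : ℕ, 1 ≤ n → ∀ s : S,
      ∃ a : A, d a - s ∈ (HomogeneousIdeal.irrelevant 𝒜).toIdeal ^ n) ∧
    ∀ n : ℕ, 1 ≤ n → ∃ e : (A ⧸ I ^ n) ≃+*
        (S ⧸ ((HomogeneousIdeal.irrelevant 𝒜).toIdeal ^ n)),
      ∀ a : A, e (Ideal.Quotient.mk (I ^ n) a) =
        Ideal.Quotient.mk ((HomogeneousIdeal.irrelevant 𝒜).toIdeal ^ n) (d a) := by
  set d' : A →+* S := d.toRingHom with hd'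
  have hd0' : ∀ a : A, π 0 (DirectSum.decompose 𝒜 (d' a) 0) =
      grMk I 0 a (by simp [Ideal.one_eq_top]) := hd0
  have hd1' : ∀ a : A, ∀ ha : a ∈ I, π 1 (DirectSum.decompose 𝒜 (d' a) 1) =
      grMk I 1 a (by simpa using ha) := hd1
  have hsurjS : ∀ (m : ℕ) (s : S), ∃ a : A,
      d' a - s ∈ (HomogeneousIdeal.irrelevant 𝒜).toIdeal ^ m := by
    intro m s
    obtain ⟨a, ha⟩ := auxSurj 𝒜 I π hbij hπ d' hd0' hd1' m s
    exact ⟨a, auxKJ 𝒜 I π hbij hπ m _ ha⟩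
  refine ⟨fun n _ s => hsurjS n s, fun n hn => ?_⟩
  set J : Ideal S := (HomogeneousIdeal.irrelevant 𝒜).toIdeal with hJ
  set φ : A →+* S ⧸ (J ^ n) := (Ideal.Quotient.mk (J ^ n)).comp d' with hφ
  have hker : RingHom.ker φ = I ^ n := by
    ext a
    rw [RingHom.mem_ker, hφ, RingHom.comp_apply, Ideal.Quotient.eq_zero_iff_mem]
    exact (auxKer 𝒜 I π hbij hπ d' hd0' hd1' n a).symm
  have hφs : Function.Surjective φ := by
    intro q
    obtain ⟨s, rfl⟩ := Ideal.Quotient.mk_surjective q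
    obtain ⟨a, ha⟩ := hsurjS n s
    exact ⟨a, Ideal.Quotient.eq.2 ha⟩
  refine ⟨(Ideal.quotEquivOfEq hker.symm).trans (RingHom.quotientKerEquivOfSurjective hφs), ?_⟩
  intro a
  show (RingHom.quotientKerEquivOfSurjective hφs)
      ((Ideal.quotEquivOfEq hker.symm) (Ideal.Quotient.mk (I ^ n) a)) = _
  rw [Ideal.quotEquivOfEq_mk]
  exact RingHom.kerLift_mk φ a
end

section
/- Let d : A → B be a homomorphism of Noetherian rings H and I ⊆ A, J ⊆ B ideals with d(I^n) ⊆ J^n such that the induced maps A/I^n → B/J^n are isomorphisms for all n ≥ 1. Then for every maximal ideal 𝔪 of B containing J, the induced morphism Spec B → Spec A is étale (formally étale and of finite presentation, assuming A, B are finitely generated k-algebras) at [𝔪]; equivalently, d induces an isomorphism of the completions of the local rings A_{d^{-1}(𝔪)} and B_𝔪. -/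
/-!
Put `𝔭 = d⁻¹(𝔪)`, which contains `I`. In `B ⧸ Jⁿ` the image of `𝔪ⁿ` is the `n`-th power of
the image of `𝔪`, and that image is the image of `𝔭` because `A → B ⧸ Jⁿ` is surjective. Hence
`d⁻¹(𝔪ⁿ) = 𝔭ⁿ + Iⁿ = 𝔭ⁿ`, so `d` induces isomorphisms `A ⧸ 𝔭ⁿ ≅ B ⧸ 𝔪ⁿ`, and `𝔭` is maximal.
For a maximal ideal these quotients do not change under localization, so the local map
`A_𝔭 → B_𝔪` induces isomorphisms modulo all powers of the maximal ideals, hence an isomorphism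
of the inverse limits.
-/

open IsLocalRing

theorem Ideal.comap_pow_eq_comap_pow_sup_ker {R S : Type*} [CommRing R] [CommRing S]
    {f : R →+* S} (hf : Function.Surjective f) (K : Ideal S) (n : ℕ) :
    (K ^ n).comap f = K.comap f ^ n ⊔ RingHom.ker f := by
  conv_lhs => rw [← map_comap_of_surjective f hf K, ← Ideal.map_pow]
  rw [comap_map_of_surjective f hf, RingHom.ker_eq_comap_bot]

/-- `f` induces isomorphisms `R ⧸ I ^ n ≃+* S ⧸ K ^ n` for all `n`: the first condition says that
the induced maps are well defined and injective, the second that they are surjective. -/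
structure RingHom.InducesQuotientPowEquiv {R S : Type*} [CommRing R] [CommRing S]
    (f : R →+* S) (I : Ideal R) (K : Ideal S) : Prop where
  comap_pow : ∀ n, (K ^ n).comap f = I ^ n
  exists_sub_mem_pow : ∀ n y, ∃ x, f x - y ∈ K ^ n

namespace RingHom.InducesQuotientPowEquiv

variable {R S T : Type*} [CommRing R] [CommRing S] [CommRing T]
  {f : R →+* S} {g : S →+* T} {I : Ideal R} {K : Ideal S} {N : Ideal T}

theorem of_forall_pos (hmem : ∀ n, ∀ x ∈ I ^ n, f x ∈ K ^ n)
    (hsurj : ∀ n, 1 ≤ n → ∀ y, ∃ x, f x - y ∈ K ^ n)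
    (hinj : ∀ n, 1 ≤ n → ∀ x, f x ∈ K ^ n → x ∈ I ^ n) :
    f.InducesQuotientPowEquiv I K where
  comap_pow n := by
    rcases Nat.eq_zero_or_pos n with rfl | hn
    · simp
    exact le_antisymm (hinj n hn) (hmem n)
  exists_sub_mem_pow n y := by
    rcases Nat.eq_zero_or_pos n with rfl | hn
    · exact ⟨0, by simp⟩
    exact hsurj n hn y

theorem apply_mem_pow (h : f.InducesQuotientPowEquiv I K) {n : ℕ} {x : R} (hx : x ∈ I ^ n) :
    f x ∈ K ^ n :=
  (h.comap_pow n).ge hx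

theorem comp (hf : f.InducesQuotientPowEquiv I K) (hg : g.InducesQuotientPowEquiv K N) :
    (g.comp f).InducesQuotientPowEquiv I N where
  comap_pow n := by rw [← Ideal.comap_comap, hg.comap_pow, hf.comap_pow]
  exists_sub_mem_pow n z := by
    obtain ⟨y, hy⟩ := hg.exists_sub_mem_pow n z
    obtain ⟨x, hx⟩ := hf.exists_sub_mem_pow n y
    refine ⟨x, ?_⟩
    have key : g (f x) - z = g (f x - y) + (g y - z) := by rw [map_sub]; ring
    rw [RingHom.comp_apply, key]
    exact add_mem (hg.apply_mem_pow hx) hy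

theorem of_comp (hf : f.InducesQuotientPowEquiv I K)
    (hgf : (g.comp f).InducesQuotientPowEquiv I N) (hg : ∀ y ∈ K, g y ∈ N) :
    g.InducesQuotientPowEquiv K N where
  comap_pow n := by
    have hgn : K ^ n ≤ (N ^ n).comap g := by
      rw [← Ideal.map_le_iff_le_comap, Ideal.map_pow]
      exact Ideal.pow_right_mono (Ideal.map_le_iff_le_comap.2 hg) n
    refine le_antisymm (fun y hy => ?_) hgn
    obtain ⟨x, hx⟩ := hf.exists_sub_mem_pow n y
    have hgfx : g (f x) ∈ N ^ n := by
      simpa using add_mem (hgn hx) (show g y ∈ N ^ n from hy)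
    have hfx : f x ∈ K ^ n := hf.apply_mem_pow ((hgf.comap_pow n).le hgfx)
    simpa using sub_mem hfx hx
  exists_sub_mem_pow n z := by
    obtain ⟨x, hx⟩ := hgf.exists_sub_mem_pow n z
    exact ⟨f x, hx⟩

theorem surjective_quotientMk_comp (h : f.InducesQuotientPowEquiv I K) (n : ℕ) :
    Function.Surjective ((Ideal.Quotient.mk (K ^ n)).comp f) := fun y => by
  obtain ⟨y, rfl⟩ := Ideal.Quotient.mk_surjective y
  obtain ⟨x, hx⟩ := h.exists_sub_mem_pow n y
  exact ⟨x, Ideal.Quotient.eq.2 hx⟩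

theorem ker_quotientMk_comp (h : f.InducesQuotientPowEquiv I K) (n : ℕ) :
    RingHom.ker ((Ideal.Quotient.mk (K ^ n)).comp f) = I ^ n := by
  rw [← RingHom.comap_ker, Ideal.mk_ker, h.comap_pow]

theorem isMaximal [K.IsMaximal] (h : f.InducesQuotientPowEquiv I K) : I.IsMaximal := by
  let := Ideal.Quotient.field K
  have hsurj := h.surjective_quotientMk_comp 1
  have hker := h.ker_quotientMk_comp 1
  rw [pow_one] at hsurj
  rw [pow_one, pow_one] at hker
  exact hker ▸ RingHom.ker_isMaximal_of_surjective _ hsurj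

theorem comap_of_le (h : f.InducesQuotientPowEquiv I K) {𝔪 : Ideal S} (hK𝔪 : K ≤ 𝔪) :
    f.InducesQuotientPowEquiv (𝔪.comap f) 𝔪 where
  comap_pow n := by
    rcases Nat.eq_zero_or_pos n with rfl | hn
    · simp
    have hKn𝔪 : K ^ n ≤ 𝔪 := (Ideal.pow_le_self hn.ne').trans hK𝔪
    set M := 𝔪.map (Ideal.Quotient.mk (K ^ n))
    have hM : M.comap ((Ideal.Quotient.mk (K ^ n)).comp f) = 𝔪.comap f := by
      rw [← Ideal.comap_comap, Ideal.comap_map_mk hKn𝔪]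
    have hMn : (M ^ n).comap ((Ideal.Quotient.mk (K ^ n)).comp f) = (𝔪 ^ n).comap f := by
      rw [← Ideal.map_pow, ← Ideal.comap_comap,
        Ideal.comap_map_mk (Ideal.pow_right_mono hK𝔪 n)]
    have hI : I ≤ 𝔪.comap f := by
      rw [← pow_one I, ← h.comap_pow]
      exact Ideal.comap_mono (by simpa using hK𝔪)
    rw [← hMn, Ideal.comap_pow_eq_comap_pow_sup_ker (h.surjective_quotientMk_comp n), hM,
      h.ker_quotientMk_comp, sup_eq_left]
    exact Ideal.pow_right_mono hI n
  exists_sub_mem_pow n y := by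
    obtain ⟨x, hx⟩ := h.exists_sub_mem_pow n y
    exact ⟨x, Ideal.pow_right_mono hK𝔪 n hx⟩

theorem comap_pow_smul_top (h : f.InducesQuotientPowEquiv I K) (n : ℕ) :
    (K ^ n • ⊤ : Ideal S).comap f = (I ^ n • ⊤ : Ideal R) := by
  simpa using h.comap_pow n

noncomputable def quotientEquiv (h : f.InducesQuotientPowEquiv I K) (n : ℕ) :
    R ⧸ (I ^ n • ⊤ : Ideal R) ≃+* S ⧸ (K ^ n • ⊤ : Ideal S) :=
  RingEquiv.ofBijective (Ideal.quotientMap _ f (h.comap_pow_smul_top n).ge)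
    ⟨Ideal.quotientMap_injective' (h.comap_pow_smul_top n).le, fun y => by
      obtain ⟨y, rfl⟩ := Ideal.Quotient.mk_surjective y
      obtain ⟨x, hx⟩ := h.exists_sub_mem_pow n y
      exact ⟨Ideal.Quotient.mk _ x, Ideal.Quotient.eq.2 (by simpa using hx)⟩⟩

theorem quotientEquiv_mk (h : f.InducesQuotientPowEquiv I K) (n : ℕ) (x : R) :
    h.quotientEquiv n (Ideal.Quotient.mk _ x) = Ideal.Quotient.mk _ (f x) :=
  rfl

theorem transitionMap_quotientEquiv (h : f.InducesQuotientPowEquiv I K) {m n : ℕ}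
    (hmn : m ≤ n) (x : R ⧸ (I ^ n • ⊤ : Ideal R)) :
    AdicCompletion.transitionMap K S hmn (h.quotientEquiv n x) =
      h.quotientEquiv m (AdicCompletion.transitionMap I R hmn x) := by
  obtain ⟨x, rfl⟩ := Ideal.Quotient.mk_surjective x
  rfl

noncomputable def adicCompletionEquiv (h : f.InducesQuotientPowEquiv I K) :
    AdicCompletion I R ≃+* AdicCompletion K S where
  toFun x := ⟨fun n => h.quotientEquiv n (x.val n), fun hmn => by
    rw [h.transitionMap_quotientEquiv, x.2 hmn]⟩
  invFun y := ⟨fun n => (h.quotientEquiv n).symm (y.val n), fun hmn => by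
    rw [RingEquiv.eq_symm_apply, ← h.transitionMap_quotientEquiv, RingEquiv.apply_symm_apply]
    exact y.2 hmn⟩
  left_inv x := AdicCompletion.ext fun n => (h.quotientEquiv n).symm_apply_apply _
  right_inv y := AdicCompletion.ext fun n => (h.quotientEquiv n).apply_symm_apply _
  map_mul' x y := AdicCompletion.ext fun n => map_mul (h.quotientEquiv n) _ _
  map_add' x y := AdicCompletion.ext fun n => map_add (h.quotientEquiv n) _ _

theorem adicCompletionEquiv_algebraMap (h : f.InducesQuotientPowEquiv I K) (x : R) :
    h.adicCompletionEquiv (algebraMap R _ x) = algebraMap S _ (f x) :=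
  AdicCompletion.ext fun n => h.quotientEquiv_mk n x

end RingHom.InducesQuotientPowEquiv

theorem IsLocalization.AtPrime.inducesQuotientPowEquiv_algebraMap {R : Type*} [CommRing R]
    (𝔭 : Ideal R) [𝔭.IsMaximal] (Rₚ : Type*) [CommRing Rₚ] [Algebra R Rₚ]
    [IsLocalization.AtPrime Rₚ 𝔭] [IsLocalRing Rₚ] :
    (algebraMap R Rₚ).InducesQuotientPowEquiv 𝔭 (maximalIdeal Rₚ) where
  comap_pow := under_maximalIdeal_pow 𝔭 Rₚ
  exists_sub_mem_pow n y := by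
    obtain ⟨x, hx⟩ := (equivQuotMaximalIdealPow 𝔭 Rₚ n).surjective (Ideal.Quotient.mk _ y)
    obtain ⟨x, rfl⟩ := Ideal.Quotient.mk_surjective x
    exact ⟨x, Ideal.Quotient.eq.1 hx⟩

theorem stmt7_general {k A B : Type*} [Field k]
    [CommRing A] [CommRing B] [Algebra k A] [Algebra k B]
    (d : A →ₐ[k] B) (I : Ideal A) (J : Ideal B)
    (hIJ : ∀ n : ℕ, ∀ a ∈ I ^ n, d a ∈ J ^ n)
    (hiso : ∀ n : ℕ, 1 ≤ n → ∀ b : B, ∃ a : A, d a - b ∈ J ^ n)  -- surjectivity mod Jⁿ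
    (hinj : ∀ n : ℕ, 1 ≤ n → ∀ a : A, d a ∈ J ^ n → a ∈ I ^ n)   -- injectivity mod Jⁿ
    (𝔪 : Ideal B) [𝔪.IsMaximal] (hJ𝔪 : J ≤ 𝔪) :
    ∃ e : AdicCompletion (IsLocalRing.maximalIdeal
            (Localization.AtPrime (𝔪.comap (d : A →+* B))))
          (Localization.AtPrime (𝔪.comap (d : A →+* B))) ≃+*
        AdicCompletion (IsLocalRing.maximalIdeal (Localization.AtPrime 𝔪))
          (Localization.AtPrime 𝔪),
      ∀ x, e (algebraMap _ _ x) =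
        algebraMap (Localization.AtPrime 𝔪) _
          (Localization.localRingHom (𝔪.comap (d : A →+* B)) 𝔪 (d : A →+* B) rfl x) := by
  set 𝔭 := 𝔪.comap (d : A →+* B)
  have hd : (d : A →+* B).InducesQuotientPowEquiv 𝔭 𝔪 :=
    (RingHom.InducesQuotientPowEquiv.of_forall_pos hIJ hiso hinj).comap_of_le hJ𝔪
  have := hd.isMaximal
  set L := Localization.localRingHom 𝔭 𝔪 (d : A →+* B) rfl
  have hL : L.InducesQuotientPowEquiv (maximalIdeal _) (maximalIdeal _) := by
    refine (IsLocalization.AtPrime.inducesQuotientPowEquiv_algebraMap 𝔭 _).of_comp ?_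
      (map_nonunit L)
    rw [show L.comp (algebraMap A _) = (algebraMap B _).comp d from
      RingHom.ext (Localization.localRingHom_to_map _ _ _ rfl)]
    exact hd.comp (IsLocalization.AtPrime.inducesQuotientPowEquiv_algebraMap 𝔪 _)
  exact ⟨hL.adicCompletionEquiv, hL.adicCompletionEquiv_algebraMap⟩

/-- let `d : A → B` be a homomorphism of affine `k`-algebras, `I ⊆ A`,
`J ⊆ B` ideals with `d(Iⁿ) ⊆ Jⁿ` such that the induced maps `A/Iⁿ → B/Jⁿ` are
isomorphisms for all `n ≥ 1`.  Then for every maximal ideal `𝔪` of `B` containing `J`,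
`d` induces an isomorphism between the completion of the local ring `A_{d⁻¹(𝔪)}`
(at its maximal ideal) and the completion of the local ring `B_𝔪`, i.e. the induced
morphism `Spec B → Spec A` is étale at `[𝔪]`. -/
theorem stmt7 {k A B : Type*} [Field k] [IsAlgClosed k] [CharZero k]
    [CommRing A] [CommRing B] [Algebra k A] [Algebra k B]
    [Algebra.FiniteType k A] [Algebra.FiniteType k B]
    (d : A →ₐ[k] B) (I : Ideal A) (J : Ideal B)
    (hIJ : ∀ n : ℕ, ∀ a ∈ I ^ n, d a ∈ J ^ n)
    (hiso : ∀ n : ℕ, 1 ≤ n → ∀ b : B, ∃ a : A, d a - b ∈ J ^ n)  -- surjectivity mod Jⁿ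
    (hinj : ∀ n : ℕ, 1 ≤ n → ∀ a : A, d a ∈ J ^ n → a ∈ I ^ n)   -- injectivity mod Jⁿ
    (𝔪 : Ideal B) [𝔪.IsMaximal] (hJ𝔪 : J ≤ 𝔪) :
    ∃ e : AdicCompletion (IsLocalRing.maximalIdeal
            (Localization.AtPrime (𝔪.comap (d : A →+* B))))
          (Localization.AtPrime (𝔪.comap (d : A →+* B))) ≃+*
        AdicCompletion (IsLocalRing.maximalIdeal (Localization.AtPrime 𝔪))
          (Localization.AtPrime 𝔪),
      ∀ x, e (algebraMap _ _ x) =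
        algebraMap (Localization.AtPrime 𝔪) _
          (Localization.localRingHom (𝔪.comap (d : A →+* B)) 𝔪 (d : A →+* B) rfl x) :=
  stmt7_general d I J hIJ hiso hinj 𝔪 hJ𝔪
end

section
/- Let A = k[X_1,…,X_n], I an ideal with R = A/I smooth over k, and γ : Ω_{A/k} ⊗_A R → I/I² an R-linear splitting of the conormal sequence. Define d_1 : A → I/I² by d_1(f) = γ(df ⊗ 1) and d_0 : A → R the natural quotient. Then d_1 restricted to I equals the natural map I → I/I², and the assignment X_i ↦ d_0(X_i) + d_1(X_i) extends to a well-defined k-algebra homomorphism d : A → S(I/I²) whose degree-0 component is d_0 and degree-1 component is d_1. -/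
/-!
`u = algebraMap A S` lands in degree zero and `v = ε₁ ∘ γ ∘ (1 ⊗ D)` is a `k`-derivation
`A → S` landing in degree one. If `d(Xᵢ) = u(Xᵢ) + v(Xᵢ)`, the degree zero and one parts of
`d(p)` are `u(p)` and `v(p)`, by induction on `p`: multiplying by `u(Xᵢ) + v(Xᵢ)` turns them
into `u(p) u(Xᵢ)` and `u(Xᵢ) v(p) + v(Xᵢ) u(p)`, which is `v(p Xᵢ)` by the Leibniz rule.
-/

open KaehlerDifferential TensorProduct

namespace DirectSum

variable {S σ : Type*} [Semiring S] [SetLike σ S] [AddSubmonoidClass σ S]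
  (𝒜 : ℕ → σ) [GradedRing 𝒜] {u v : S}

theorem coe_decompose_add_mul_zero (hu : u ∈ 𝒜 0) (hv : v ∈ 𝒜 1) (y : S) :
    (decompose 𝒜 ((u + v) * y) 0 : S) = u * decompose 𝒜 y 0 := by
  rw [add_mul, decompose_add, add_apply, AddMemClass.coe_add,
    coe_decompose_mul_of_left_mem_zero 𝒜 hu,
    coe_decompose_mul_of_left_mem_of_not_le 𝒜 hv (by omega), add_zero]

theorem coe_decompose_add_mul_one (hu : u ∈ 𝒜 0) (hv : v ∈ 𝒜 1) (y : S) :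
    (decompose 𝒜 ((u + v) * y) 1 : S) = u * decompose 𝒜 y 1 + v * decompose 𝒜 y 0 := by
  rw [add_mul, decompose_add, add_apply, AddMemClass.coe_add,
    coe_decompose_mul_of_left_mem_zero 𝒜 hu,
    coe_decompose_mul_of_left_mem_of_le 𝒜 hv le_rfl, Nat.sub_self]

end DirectSum

open DirectSum in
theorem MvPolynomial.coe_decompose_of_map_X_eq_algebraMap_add_derivation
    {k ι S σ : Type*} [CommRing k] [CommRing S]
    [Algebra (MvPolynomial ι k) S] [Algebra k S] [IsScalarTower k (MvPolynomial ι k) S]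
    [SetLike σ S] [AddSubmonoidClass σ S] (𝒜 : ℕ → σ) [GradedRing 𝒜]
    (δ : Derivation k (MvPolynomial ι k) S)
    (halg : ∀ a, algebraMap (MvPolynomial ι k) S a ∈ 𝒜 0) (hδ : ∀ a, δ a ∈ 𝒜 1)
    (φ : MvPolynomial ι k →ₐ[k] S)
    (hφ : ∀ i, φ (X i) = algebraMap (MvPolynomial ι k) S (X i) + δ (X i))
    (a : MvPolynomial ι k) :
    (decompose 𝒜 (φ a) 0 : S) = algebraMap (MvPolynomial ι k) S a ∧
      (decompose 𝒜 (φ a) 1 : S) = δ a := by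
  induction a using MvPolynomial.induction_on with
  | C c =>
    have hC : φ (C c) = algebraMap (MvPolynomial ι k) S (C c) := by
      rw [← algebraMap_eq, AlgHom.commutes, ← IsScalarTower.algebraMap_apply]
    rw [hC, ← algebraMap_eq, Derivation.map_algebraMap, algebraMap_eq]
    exact ⟨decompose_of_mem_same 𝒜 (halg _), decompose_of_mem_ne 𝒜 (halg _) (by omega)⟩
  | add p q hp hq =>
    simp only [map_add, decompose_add, DirectSum.add_apply, AddMemClass.coe_add, hp.1, hp.2,
      hq.1, hq.2, and_self]
  | mul_X p i hp =>
    rw [map_mul, mul_comm, hφ]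
    refine ⟨?_, ?_⟩
    · rw [coe_decompose_add_mul_zero 𝒜 (halg _) (hδ _), hp.1, ← map_mul, mul_comm]
    · rw [coe_decompose_add_mul_one 𝒜 (halg _) (hδ _), hp.1, hp.2, Derivation.leibniz,
        Algebra.smul_def, Algebra.smul_def]
      ring

theorem stmt9_general {k : Type*} [Field k] {n : ℕ}
    {S : Type*} [CommRing S]
    [Algebra (MvPolynomial (Fin n) k) S] [Algebra k S]
    [IsScalarTower k (MvPolynomial (Fin n) k) S]
    (I : Ideal (MvPolynomial (Fin n) k))
    (𝒜 : ℕ → Submodule (MvPolynomial (Fin n) k) S) [GradedAlgebra 𝒜]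
    (e0 : (MvPolynomial (Fin n) k ⧸ I) →+* S)
    (he0 : ∀ x, e0 x ∈ 𝒜 0)
    (he0' : ∀ a : MvPolynomial (Fin n) k,
      e0 (Ideal.Quotient.mk I a) = algebraMap (MvPolynomial (Fin n) k) S a)
    (ε1 : I.Cotangent →ₗ[MvPolynomial (Fin n) k] S)
    (hε1 : ∀ m, ε1 m ∈ 𝒜 1)
    (γ : ((MvPolynomial (Fin n) k ⧸ I) ⊗[MvPolynomial (Fin n) k]
        KaehlerDifferential k (MvPolynomial (Fin n) k))
        →ₗ[MvPolynomial (Fin n) k ⧸ I] I.Cotangent)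
    -- `γ` splits the conormal map
    (hγ : ∀ x : ↥I,
      γ ((1 : MvPolynomial (Fin n) k ⧸ I) ⊗ₜ D k (MvPolynomial (Fin n) k) (x : _)) =
        I.toCotangent x) :
    -- `d₁ := γ ∘ (df ⊗ 1)` restricted to `I` is the natural map `I → I/I²`
    (∀ (f : MvPolynomial (Fin n) k) (hf : f ∈ I),
      γ ((1 : MvPolynomial (Fin n) k ⧸ I) ⊗ₜ D k (MvPolynomial (Fin n) k) f) =
        I.toCotangent ⟨f, hf⟩) ∧
    -- and `Xᵢ ↦ d₀(Xᵢ) + d₁(Xᵢ)` extends to a `k`-algebra homomorphism with the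
    -- prescribed degree zero and degree one components
    ∃ d : MvPolynomial (Fin n) k →ₐ[k] S,
      (∀ i : Fin n, d (MvPolynomial.X i) =
        e0 (Ideal.Quotient.mk I (MvPolynomial.X i)) +
          ε1 (γ ((1 : MvPolynomial (Fin n) k ⧸ I) ⊗ₜ
            D k (MvPolynomial (Fin n) k) (MvPolynomial.X i)))) ∧
      (∀ a : MvPolynomial (Fin n) k,
        (DirectSum.decompose 𝒜 (d a) 0 : S) = e0 (Ideal.Quotient.mk I a)) ∧
      (∀ a : MvPolynomial (Fin n) k,
        (DirectSum.decompose 𝒜 (d a) 1 : S) =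
          ε1 (γ ((1 : MvPolynomial (Fin n) k ⧸ I) ⊗ₜ
            D k (MvPolynomial (Fin n) k) a))) := by
  set A := MvPolynomial (Fin n) k
  let δ : Derivation k A S :=
    (ε1 ∘ₗ γ.restrictScalars A ∘ₗ TensorProduct.mk A (A ⧸ I) _ 1).compDer (D k A)
  have hδ : ∀ a, δ a = ε1 (γ (1 ⊗ₜ D k A a)) := fun _ => rfl
  have halg : ∀ a, algebraMap A S a ∈ 𝒜 0 := fun a => he0' a ▸ he0 _
  let d : A →ₐ[k] S := MvPolynomial.aeval fun i => algebraMap A S (.X i) + δ (.X i)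
  have hdX : ∀ i, d (.X i) = algebraMap A S (.X i) + δ (.X i) := MvPolynomial.aeval_X _
  have hd := MvPolynomial.coe_decompose_of_map_X_eq_algebraMap_add_derivation 𝒜 δ halg
    (fun _ => hε1 _) d hdX
  refine ⟨fun f hf => hγ ⟨f, hf⟩, d, fun i => by rw [hdX, he0', hδ], fun a => ?_,
    fun a => ?_⟩
  · rw [(hd a).1, he0']
  · rw [(hd a).2, hδ]

/-- let `A = k[X₁,…,Xₙ]`, `I` an ideal with `R = A/I` smooth over `k`,
and `γ : Ω_{A/k} ⊗_A R → I/I²` an `R`-linear splitting of the conormal sequence.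
Set `d₁(f) = γ(df ⊗ 1)` and `d₀ : A → R` the natural quotient.  Then `d₁` restricted to
`I` is the natural map `I → I/I²`, and `Xᵢ ↦ d₀(Xᵢ) + d₁(Xᵢ)` extends to a `k`-algebra
homomorphism `d : A → S(I/I²)` whose degree zero component is `d₀` and degree one
component is `d₁`.  (Here `S` is a model of the symmetric algebra `S(I/I²)`: a graded
`A`-algebra whose degree zero part contains `R` via `e₀` and degree one part contains
`I/I²` via `ε₁`.) -/
theorem stmt9 {k : Type*} [Field k] [CharZero k] {n : ℕ}
    {S : Type*} [CommRing S]
    [Algebra (MvPolynomial (Fin n) k) S] [Algebra k S]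
    [IsScalarTower k (MvPolynomial (Fin n) k) S]
    (I : Ideal (MvPolynomial (Fin n) k))
    [Algebra.Smooth k (MvPolynomial (Fin n) k ⧸ I)]
    (𝒜 : ℕ → Submodule (MvPolynomial (Fin n) k) S) [GradedAlgebra 𝒜]
    (e0 : (MvPolynomial (Fin n) k ⧸ I) →+* S)
    (he0 : ∀ x, e0 x ∈ 𝒜 0)
    (he0' : ∀ a : MvPolynomial (Fin n) k,
      e0 (Ideal.Quotient.mk I a) = algebraMap (MvPolynomial (Fin n) k) S a)
    (ε1 : I.Cotangent →ₗ[MvPolynomial (Fin n) k] S)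
    (hε1 : ∀ m, ε1 m ∈ 𝒜 1)
    (γ : ((MvPolynomial (Fin n) k ⧸ I) ⊗[MvPolynomial (Fin n) k]
        KaehlerDifferential k (MvPolynomial (Fin n) k))
        →ₗ[MvPolynomial (Fin n) k ⧸ I] I.Cotangent)
    -- `γ` splits the conormal map
    (hγ : ∀ x : ↥I,
      γ ((1 : MvPolynomial (Fin n) k ⧸ I) ⊗ₜ D k (MvPolynomial (Fin n) k) (x : _)) =
        I.toCotangent x) :
    -- `d₁ := γ ∘ (df ⊗ 1)` restricted to `I` is the natural map `I → I/I²`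
    (∀ (f : MvPolynomial (Fin n) k) (hf : f ∈ I),
      γ ((1 : MvPolynomial (Fin n) k ⧸ I) ⊗ₜ D k (MvPolynomial (Fin n) k) f) =
        I.toCotangent ⟨f, hf⟩) ∧
    -- and `Xᵢ ↦ d₀(Xᵢ) + d₁(Xᵢ)` extends to a `k`-algebra homomorphism with the
    -- prescribed degree zero and degree one components
    ∃ d : MvPolynomial (Fin n) k →ₐ[k] S,
      (∀ i : Fin n, d (MvPolynomial.X i) =
        e0 (Ideal.Quotient.mk I (MvPolynomial.X i)) +
          ε1 (γ ((1 : MvPolynomial (Fin n) k ⧸ I) ⊗ₜ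
            D k (MvPolynomial (Fin n) k) (MvPolynomial.X i)))) ∧
      (∀ a : MvPolynomial (Fin n) k,
        (DirectSum.decompose 𝒜 (d a) 0 : S) = e0 (Ideal.Quotient.mk I a)) ∧
      (∀ a : MvPolynomial (Fin n) k,
        (DirectSum.decompose 𝒜 (d a) 1 : S) =
          ε1 (γ ((1 : MvPolynomial (Fin n) k ⧸ I) ⊗ₜ
            D k (MvPolynomial (Fin n) k) a))) :=
  stmt9_general I 𝒜 e0 he0 he0' ε1 hε1 γ hγ
end

section
/- Let A = k[X_1,…,X_n] and I an ideal such that R = A/I is smooth over k. Then there exists a k-algebra homomorphism d : A → S(I/I²) into the symmetric algebra of the conormal module which induces isomorphisms A/I^n ≅ S(I/I²)/J^n for all n ≥ 1, where J is the augmentation ideal of S(I/I²). In particular, the I-adic completion of A is isomorphic to the J-adic completion of S(I/I²). -/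
set_option synthInstance.maxHeartbeats 1000000
set_option maxHeartbeats 1000000

/-!
Choose a splitting of the conormal sequence of `A/I` (smoothness): this gives classes
`γⱼ ∈ I/I²` with `[f] = ∑ⱼ ∂ⱼf · γⱼ` for every `f ∈ I`. Let `eⱼ ∈ S₁` correspond to `γⱼ` and
let `d : A → S` send `Xⱼ` to `Xⱼ + eⱼ`. By Taylor's formula, `d f ≡ f + ∑ⱼ ∂ⱼf · eⱼ` modulo
`J²`; since `A → S` lands in `S₀ ≅ A/I`, this gives `d f ≡ [f]` modulo `J²` for `f ∈ I`.
Multiplicativity of the identification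
`Sᵢ ≅ Iⁱ/Iⁱ⁺¹` then gives `d f ≡ [f]` modulo `Jᵐ⁺¹` for every `f ∈ Iᵐ`. Comparing the `I`-adic
filtration of `A` with the `J`-adic filtration of `S` step by step, `d` induces isomorphisms
`A/Iᵐ ≅ S/Jᵐ`, and these are compatible, hence pass to the completions.
-/

open DirectSum HomogeneousIdeal MvPolynomial Pointwise

namespace HomogeneousIdeal

variable {A σ : Type*} [CommRing A] [SetLike σ A] [AddSubgroupClass σ A]
  (𝒜 : ℕ → σ) [GradedRing 𝒜]

theorem irrelevant_pow_le_span (m : ℕ) :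
    𝒜₊.toIdeal ^ m ≤ Ideal.span (⋃ i ≥ m, (𝒜 i : Set A)) := by
  induction m with
  | zero =>
    rw [pow_zero, Ideal.one_eq_top, top_le_iff, Ideal.eq_top_iff_one]
    exact Ideal.subset_span (Set.mem_biUnion (le_refl 0) (SetLike.one_mem_graded 𝒜))
  | succ m ih =>
    calc 𝒜₊.toIdeal ^ (m + 1)
        ≤ Ideal.span (⋃ i ≥ m, (𝒜 i : Set A)) * Ideal.span (⋃ i > 0, (𝒜 i : Set A)) := by
          rw [pow_succ]; exact Ideal.mul_mono ih (irrelevant_eq_span 𝒜).le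
      _ = Ideal.span ((⋃ i ≥ m, (𝒜 i : Set A)) * ⋃ i > 0, (𝒜 i : Set A)) :=
          Ideal.span_mul_span' _ _
      _ ≤ _ := by
        refine Ideal.span_mono ?_
        rintro _ ⟨x, hx, y, hy, rfl⟩
        simp only [Set.mem_iUnion, SetLike.mem_coe] at hx hy ⊢
        obtain ⟨i, hi, hx⟩ := hx
        obtain ⟨j, hj, hy⟩ := hy
        exact ⟨i + j, by omega, SetLike.mul_mem_graded hx hy⟩

theorem coe_decompose_eq_zero_of_mem_span {m i : ℕ} (hi : i < m) {x : A}
    (hx : x ∈ Ideal.span (⋃ j ≥ m, (𝒜 j : Set A))) : (decompose 𝒜 x i : A) = 0 := by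
  classical
  suffices ∀ r, (decompose 𝒜 (r * x) i : A) = 0 by simpa using this 1
  induction hx using Submodule.span_induction with
  | mem y hy =>
    obtain ⟨j, hj, hy⟩ : ∃ j ≥ m, y ∈ 𝒜 j := by simpa using hy
    intro r
    rw [coe_decompose_mul_of_right_mem 𝒜 i hy, if_neg (by omega)]
  | zero => simp
  | add y z _ _ hy hz =>
    intro r
    rw [mul_add, decompose_add, DirectSum.add_apply, AddMemClass.coe_add, hy, hz, add_zero]
  | smul s y _ hy => intro r; rw [smul_eq_mul, ← mul_assoc]; exact hy _

theorem coe_decompose_eq_zero_of_mem_irrelevant_pow {m i : ℕ} (hi : i < m) {x : A}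
    (hx : x ∈ 𝒜₊.toIdeal ^ m) : (decompose 𝒜 x i : A) = 0 :=
  coe_decompose_eq_zero_of_mem_span 𝒜 hi (irrelevant_pow_le_span 𝒜 m hx)

theorem eq_zero_of_mem_irrelevant_pow_succ {m : ℕ} {x : A} (hx : x ∈ 𝒜 m)
    (hx' : x ∈ 𝒜₊.toIdeal ^ (m + 1)) : x = 0 := by
  simpa [decompose_of_mem_same 𝒜 hx] using
    coe_decompose_eq_zero_of_mem_irrelevant_pow 𝒜 (Nat.lt_succ_self m) hx'

theorem mem_of_forall_coe_decompose_mem {K : Ideal A} {x : A}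
    (h : ∀ i, (decompose 𝒜 x i : A) ∈ K) : x ∈ K := by
  classical
  rw [← sum_support_decompose 𝒜 x]
  exact sum_mem fun i _ => h i

theorem sub_coe_decompose_mem_irrelevant_pow_succ
    (hgen : ∀ i, ∀ x ∈ 𝒜 i, x ∈ 𝒜₊.toIdeal ^ i) {m : ℕ} {s : A}
    (hs : s ∈ 𝒜₊.toIdeal ^ m) :
    s - decompose 𝒜 s m ∈ 𝒜₊.toIdeal ^ (m + 1) := by
  classical
  refine mem_of_forall_coe_decompose_mem 𝒜 fun i => ?_
  rw [decompose_sub, DirectSum.sub_apply, AddSubgroupClass.coe_sub]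
  rcases lt_trichotomy i m with hi | rfl | hi
  · rw [coe_decompose_eq_zero_of_mem_irrelevant_pow 𝒜 hi hs,
      decompose_of_mem_ne 𝒜 (decompose 𝒜 s m).2 hi.ne', sub_zero]
    exact zero_mem _
  · rw [decompose_coe, of_eq_same, sub_self]
    exact zero_mem _
  · rw [decompose_of_mem_ne 𝒜 (decompose 𝒜 s m).2 hi.ne, sub_zero]
    exact Ideal.pow_le_pow_right hi (hgen i _ (decompose 𝒜 s i).2)

end HomogeneousIdeal

open KaehlerDifferential in
theorem exists_grMk_one_eq_sum_pderiv_smul {R σ : Type*} [CommRing R] [Fintype σ]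
    (I : Ideal (MvPolynomial σ R)) [Algebra.FormallySmooth R (MvPolynomial σ R ⧸ I)] :
    ∃ γ : σ → Gr I 1, ∀ f (hf : f ∈ I ^ 1), grMk I 1 f hf = ∑ j, pderiv j f • γ j := by
  set K := RingHom.ker (algebraMap (MvPolynomial σ R) (MvPolynomial σ R ⧸ I))
  have hK : K = I := Ideal.mk_ker
  obtain ⟨l, hl⟩ := (Algebra.FormallySmooth.iff_split_injection (R := R)
    (Ideal.Quotient.mk_surjective (I := I))).mp inferInstance
  let c : K.Cotangent →ₗ[MvPolynomial σ R] Gr I 1 :=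
    Submodule.liftQ _ ((Submodule.mkQ _).comp (Submodule.inclusion (by rw [hK, pow_one]))) <| by
      refine Submodule.smul_le.2 fun a ha x _ => ?_
      simp only [LinearMap.mem_ker, LinearMap.comp_apply, Submodule.mkQ_apply,
        Submodule.Quotient.mk_eq_zero]
      change a * (x : MvPolynomial σ R) ∈ I ^ (1 + 1)
      rw [pow_succ, pow_one]
      exact Ideal.mul_mem_mul (hK ▸ ha) (hK ▸ x.2)
  refine ⟨fun j => c (l (1 ⊗ₜ D R _ (X j))), fun f hf => ?_⟩
  have hfK : f ∈ K := by rwa [hK, ← pow_one I]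
  have hD : D R _ f = ∑ j, pderiv j f • D R _ (X j) := by
    conv_lhs => rw [← (mvPolynomialBasis R σ).sum_repr (D R _ f)]
    simp [mvPolynomialBasis_repr_apply]
  have hcot := LinearMap.congr_fun hl (K.toCotangent ⟨f, hfK⟩)
  rw [LinearMap.comp_apply, kerCotangentToTensor_toCotangent, hD,
    TensorProduct.tmul_sum, map_sum, LinearMap.id_apply] at hcot
  calc grMk I 1 f hf = c (K.toCotangent ⟨f, hfK⟩) := rfl
    _ = _ := by rw [← hcot, map_sum]; simp [TensorProduct.tmul_smul]

section GradedModel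

variable {A S : Type*} [CommRing A] [CommRing S] [Algebra A S] {I : Ideal A}
  {𝒜 : ℕ → Submodule A S} {π : ∀ i, 𝒜 i →ₗ[A] Gr I i}
  (hbij : ∀ i, Function.Bijective (π i))

noncomputable def grLift (i : ℕ) : ↥(I ^ i) →ₗ[A] 𝒜 i :=
  (LinearEquiv.ofBijective (π i) (hbij i)).symm.toLinearMap ∘ₗ Submodule.mkQ _

theorem π_grLift (i : ℕ) (x : ↥(I ^ i)) : π i (grLift hbij i x) = Submodule.Quotient.mk x :=
  (LinearEquiv.ofBijective (π i) (hbij i)).apply_symm_apply _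

theorem grLift_surjective (i : ℕ) : Function.Surjective (grLift hbij i) :=
  (LinearEquiv.ofBijective (π i) (hbij i)).symm.surjective.comp (Submodule.mkQ_surjective _)

theorem grLift_eq_zero_iff {i : ℕ} (x : ↥(I ^ i)) :
    grLift hbij i x = 0 ↔ (x : A) ∈ I ^ (i + 1) := by
  simp [grLift, Submodule.Quotient.mk_eq_zero]

variable [GradedAlgebra 𝒜]
  (hπ : ∀ (i j : ℕ) (x : 𝒜 i) (y : 𝒜 j) (f g : A) (hf : f ∈ I ^ i) (hg : g ∈ I ^ j),
      π i x = grMk I i f hf → π j y = grMk I j g hg →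
      π (i + j) ⟨(x : S) * (y : S), SetLike.mul_mem_graded x.2 y.2⟩ =
        grMk I (i + j) (f * g) (by rw [pow_add]; exact Ideal.mul_mem_mul hf hg))
include hbij hπ

theorem coe_grLift_mul {i j : ℕ} (f g : A) (hf : f ∈ I ^ i) (hg : g ∈ I ^ j)
    (hfg : f * g ∈ I ^ (i + j)) :
    (grLift hbij (i + j) ⟨f * g, hfg⟩ : S) = grLift hbij i ⟨f, hf⟩ * grLift hbij j ⟨g, hg⟩ := by
  have := hπ i j _ _ f g hf hg (π_grLift hbij i ⟨f, hf⟩) (π_grLift hbij j ⟨g, hg⟩)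
  exact congrArg Subtype.val ((hbij (i + j)).1 ((π_grLift hbij _ _).trans this.symm))

theorem grLift_zero_one :
    grLift hbij 0 ⟨1, by simp⟩ = ⟨1, SetLike.one_mem_graded 𝒜⟩ := by
  obtain ⟨⟨f, hf⟩, hf1⟩ := Submodule.mkQ_surjective _ (π 0 ⟨1, SetLike.one_mem_graded 𝒜⟩)
  have := hπ 0 0 _ _ f 1 hf (by simp) hf1.symm (π_grLift hbij 0 _)
  refine (hbij 0).1 (Eq.trans ?_ hf1)
  simpa [grMk] using this

theorem coe_grLift_zero (f : A) (hf : f ∈ I ^ 0) :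
    (grLift hbij 0 ⟨f, hf⟩ : S) = algebraMap A S f := by
  have : (⟨f, hf⟩ : ↥(I ^ 0)) = f • ⟨1, by simp⟩ := Subtype.ext (mul_one f).symm
  rw [this, map_smul, grLift_zero_one hbij hπ, Submodule.coe_smul, Algebra.algebraMap_eq_smul_one]

theorem algebraMap_eq_zero_of_mem {f : A} (hf : f ∈ I) : algebraMap A S f = 0 := by
  rw [← coe_grLift_zero hbij hπ f (by simp), (grLift_eq_zero_iff hbij _).2 (by simpa using hf),
    ZeroMemClass.coe_zero]

theorem coe_grLift_mem_irrelevant_pow {i : ℕ} (x : ↥(I ^ i)) :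
    (grLift hbij i x : S) ∈ 𝒜₊.toIdeal ^ i := by
  obtain ⟨f, hf⟩ := x
  induction hf using Submodule.pow_induction_on_right' with
  | algebraMap r => simp
  | add f g i hf hg hf' hg' =>
    change (grLift hbij i (⟨f, hf⟩ + ⟨g, hg⟩) : S) ∈ _
    rw [map_add, Submodule.coe_add]
    exact add_mem hf' hg'
  | mul_mem i f hf hf' g hg =>
    change (grLift hbij (i + 1) ⟨f * g, by rw [pow_succ]; exact Ideal.mul_mem_mul hf hg⟩ : S) ∈
      _ ^ (i + 1)
    rw [coe_grLift_mul hbij hπ f g hf (by simpa using hg), pow_succ]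
    exact Ideal.mul_mem_mul hf' (mem_irrelevant_of_mem 𝒜 one_pos (grLift hbij 1 _).2)

theorem mem_irrelevant_pow_of_mem {i : ℕ} {x : S} (hx : x ∈ 𝒜 i) :
    x ∈ 𝒜₊.toIdeal ^ i := by
  obtain ⟨y, hy⟩ := grLift_surjective hbij i ⟨x, hx⟩
  simpa [hy] using coe_grLift_mem_irrelevant_pow hbij hπ y

end GradedModel

namespace AdicCompletion

theorem factorPow_evalₐ {R : Type*} [CommRing R] (I : Ideal R) {m n : ℕ} (hle : m ≤ n)
    (x : AdicCompletion I R) : Ideal.Quotient.factorPow I hle (evalₐ I n x) = evalₐ I m x := by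
  obtain ⟨a, ha⟩ := Ideal.Quotient.mk_surjective (x.val n)
  have hm : x.val m = Ideal.Quotient.mk _ a := by
    rw [← x.property hle, ← ha, transitionMap_ideal_mk]
  rw [← factor_eval_eq_evalₐ I x (by simp), ← factor_eval_eq_evalₐ I x (by simp), eval_apply,
    eval_apply, ← ha, hm]
  rfl

theorem exists_ringEquiv_of_bijective_quotientMap {A S : Type*} [CommRing A] [CommRing S]
    {I : Ideal A} {J : Ideal S} (d : A →+* S) (hd : ∀ m, I ^ m ≤ (J ^ m).comap d)
    (hbij : ∀ m, Function.Bijective (Ideal.quotientMap (J ^ m) d (hd m))) :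
    ∃ ehat : AdicCompletion I A ≃+* AdicCompletion J S,
      ∀ a, ehat (algebraMap A _ a) = algebraMap S _ (d a) := by
  let E m := RingEquiv.ofBijective _ (hbij m)
  have hE : ∀ {m n : ℕ} (hle : m ≤ n) (x : A ⧸ I ^ n),
      Ideal.Quotient.factorPow J hle (E n x) = E m (Ideal.Quotient.factorPow I hle x) := by
    intro m n hle x
    obtain ⟨a, rfl⟩ := Ideal.Quotient.mk_surjective x
    rfl
  have hE' : ∀ {m n : ℕ} (hle : m ≤ n) (y : S ⧸ J ^ n),
      Ideal.Quotient.factorPow I hle ((E n).symm y) =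
        (E m).symm (Ideal.Quotient.factorPow J hle y) := by
    intro m n hle y
    rw [RingEquiv.eq_symm_apply, ← hE, RingEquiv.apply_symm_apply]
  let fwd := liftRingHom J (fun m => (E m : A ⧸ I ^ m →+* S ⧸ J ^ m).comp (evalₐ I m).toRingHom)
    fun hle => RingHom.ext fun x => by simp [hE, factorPow_evalₐ]
  let bwd := liftRingHom I
    (fun m => ((E m).symm : S ⧸ J ^ m →+* A ⧸ I ^ m).comp (evalₐ J m).toRingHom)
    fun hle => RingHom.ext fun x => by simp [hE', factorPow_evalₐ]
  have hfwd : ∀ n x, evalₐ J n (fwd x) = E n (evalₐ I n x) := fun n x =>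
    evalₐ_liftRingHom _ _ _ n x
  have hbwd : ∀ n x, evalₐ I n (bwd x) = (E n).symm (evalₐ J n x) := fun n x =>
    evalₐ_liftRingHom _ _ _ n x
  refine ⟨RingEquiv.ofRingHom fwd bwd ?_ ?_, fun a => ext_evalₐ fun n => ?_⟩
  · exact RingHom.ext fun x => ext_evalₐ fun n => by
      rw [RingHom.comp_apply, hfwd, hbwd, RingEquiv.apply_symm_apply, RingHom.id_apply]
  · exact RingHom.ext fun x => ext_evalₐ fun n => by
      rw [RingHom.comp_apply, hbwd, hfwd, RingEquiv.symm_apply_apply, RingHom.id_apply]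
  · rw [RingEquiv.ofRingHom_apply, hfwd, algebraMap_apply, algebraMap_apply, evalₐ_of, evalₐ_of]
    rfl

end AdicCompletion

section Taylor

variable {k σ S : Type*} [CommRing k] [Fintype σ] [CommRing S] [Algebra (MvPolynomial σ k) S]
  [Algebra k S] [IsScalarTower k (MvPolynomial σ k) S]

noncomputable def taylorLift (ε : σ → S) : MvPolynomial σ k →ₐ[k] S :=
  aeval fun j => algebraMap (MvPolynomial σ k) S (X j) + ε j

theorem taylorLift_sub_sub_sum_mem_sq {J : Ideal S} {ε : σ → S} (hε : ∀ j, ε j ∈ J)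
    (f : MvPolynomial σ k) :
    taylorLift ε f - algebraMap (MvPolynomial σ k) S f - ∑ j, pderiv j f • ε j ∈ J ^ 2 := by
  induction f using MvPolynomial.induction_on with
  | C a => simp [taylorLift, IsScalarTower.algebraMap_apply k (MvPolynomial σ k) S]
  | add p q hp hq =>
    convert add_mem hp hq using 1
    simp only [map_add, add_smul, Finset.sum_add_distrib]
    ring
  | mul_X p j hp =>
    have hsum : ∑ i, pderiv i (p * X j) • ε i =
        algebraMap (MvPolynomial σ k) S (X j) * ∑ i, pderiv i p • ε i + p • ε j := by
      simp only [pderiv_mul, Algebra.smul_def, map_add, map_mul, add_mul, Finset.sum_add_distrib,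
        Finset.mul_sum]
      congr 1
      · exact Finset.sum_congr rfl fun i _ => by ring
      · classical
        simp [pderiv_X, Pi.single_apply]
    have : taylorLift ε (p * X j) - algebraMap (MvPolynomial σ k) S (p * X j) -
        ∑ i, pderiv i (p * X j) • ε i =
        (taylorLift ε p - algebraMap (MvPolynomial σ k) S p - ∑ i, pderiv i p • ε i) *
          (algebraMap (MvPolynomial σ k) S (X j) + ε j) + (∑ i, pderiv i p • ε i) * ε j := by
      rw [hsum]
      simp only [map_mul, taylorLift, aeval_X, Algebra.smul_def]
      ring
    rw [this]
    refine add_mem (Ideal.mul_mem_right _ _ hp) ?_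
    rw [pow_two]
    exact Ideal.mul_mem_mul (sum_mem fun i _ => Submodule.smul_of_tower_mem _ _ (hε i)) (hε j)

theorem taylorLift_sub_algebraMap_mem {J : Ideal S} {ε : σ → S} (hε : ∀ j, ε j ∈ J)
    (f : MvPolynomial σ k) : taylorLift ε f - algebraMap (MvPolynomial σ k) S f ∈ J := by
  have hsum : ∑ j, pderiv j f • ε j ∈ J := sum_mem fun j _ => Submodule.smul_of_tower_mem _ _ (hε j)
  simpa using add_mem (Ideal.pow_le_self two_ne_zero (taylorLift_sub_sub_sum_mem_sq hε f)) hsum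

end Taylor

theorem exists_coe_grLift_one_eq_sum_pderiv_smul {k σ S : Type*} [CommRing k] [Fintype σ]
    [CommRing S] [Algebra (MvPolynomial σ k) S] {I : Ideal (MvPolynomial σ k)}
    [Algebra.FormallySmooth k (MvPolynomial σ k ⧸ I)] {𝒜 : ℕ → Submodule (MvPolynomial σ k) S}
    {π : ∀ i, 𝒜 i →ₗ[MvPolynomial σ k] Gr I i} (hbij : ∀ i, Function.Bijective (π i)) :
    ∃ e : σ → 𝒜 1, ∀ f (hf : f ∈ I ^ 1),
      (grLift hbij 1 ⟨f, hf⟩ : S) = ∑ j, pderiv j f • (e j : S) := by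
  obtain ⟨γ, hγ⟩ := exists_grMk_one_eq_sum_pderiv_smul I
  refine ⟨fun j => (LinearEquiv.ofBijective (π 1) (hbij 1)).symm (γ j), fun f hf => ?_⟩
  change ((LinearEquiv.ofBijective (π 1) (hbij 1)).symm (grMk I 1 f hf) : S) = _
  simp [hγ]

section TaylorLiftOfGradedModel

variable {k σ S : Type*} [CommRing k] [Fintype σ] [CommRing S] [Algebra (MvPolynomial σ k) S]
  [Algebra k S] [IsScalarTower k (MvPolynomial σ k) S] {I : Ideal (MvPolynomial σ k)}
  {𝒜 : ℕ → Submodule (MvPolynomial σ k) S} [GradedAlgebra 𝒜]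
  {π : ∀ i, 𝒜 i →ₗ[MvPolynomial σ k] Gr I i} (hbij : ∀ i, Function.Bijective (π i))
  (hπ : ∀ (i j : ℕ) (x : 𝒜 i) (y : 𝒜 j) (f g : MvPolynomial σ k) (hf : f ∈ I ^ i)
    (hg : g ∈ I ^ j), π i x = grMk I i f hf → π j y = grMk I j g hg →
      π (i + j) ⟨(x : S) * (y : S), SetLike.mul_mem_graded x.2 y.2⟩ =
        grMk I (i + j) (f * g) (by rw [pow_add]; exact Ideal.mul_mem_mul hf hg))
  {e : σ → 𝒜 1}
  (he : ∀ f (hf : f ∈ I ^ 1), (grLift hbij 1 ⟨f, hf⟩ : S) = ∑ j, pderiv j f • (e j : S))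
include hbij hπ

theorem taylorLift_mem_irrelevant_of_mem {f : MvPolynomial σ k} (hf : f ∈ I) :
    taylorLift (fun j => (e j : S)) f ∈ 𝒜₊.toIdeal := by
  simpa [algebraMap_eq_zero_of_mem hbij hπ hf] using
    taylorLift_sub_algebraMap_mem (fun j => mem_irrelevant_of_mem 𝒜 one_pos (e j).2) f

include he

theorem taylorLift_sub_grLift_one_mem_sq (f : MvPolynomial σ k) (hf : f ∈ I ^ 1) :
    taylorLift (fun j => (e j : S)) f - grLift hbij 1 ⟨f, hf⟩ ∈ 𝒜₊.toIdeal ^ 2 := by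
  simpa [he, algebraMap_eq_zero_of_mem hbij hπ (pow_one I ▸ hf)] using
    taylorLift_sub_sub_sum_mem_sq (fun j => mem_irrelevant_of_mem 𝒜 one_pos (e j).2) f

theorem taylorLift_sub_grLift_mem_pow_succ {m : ℕ} (f : MvPolynomial σ k) (hf : f ∈ I ^ m) :
    taylorLift (fun j => (e j : S)) f - grLift hbij m ⟨f, hf⟩ ∈ 𝒜₊.toIdeal ^ (m + 1) := by
  induction hf using Submodule.pow_induction_on_right' with
  | algebraMap r =>
    change _ - (grLift hbij 0 ⟨r, by simp⟩ : S) ∈ _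
    rw [coe_grLift_zero hbij hπ, zero_add, pow_one]
    exact taylorLift_sub_algebraMap_mem (fun j => mem_irrelevant_of_mem 𝒜 one_pos (e j).2) r
  | add f g i hf hg hf' hg' =>
    change _ - (grLift hbij i (⟨f, hf⟩ + ⟨g, hg⟩) : S) ∈ _
    rw [map_add, map_add, Submodule.coe_add, add_sub_add_comm]
    exact add_mem hf' hg'
  | mul_mem i f hf hf' g hg =>
    have hg1 : g ∈ I ^ 1 := by simpa using hg
    change _ - (grLift hbij (i + 1) ⟨f * g, by rw [pow_succ]; exact Ideal.mul_mem_mul hf hg⟩ : S)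
      ∈ _ ^ (i + 1 + 1)
    rw [coe_grLift_mul hbij hπ f g hf hg1, map_mul,
      show ∀ a b c d : S, a * b - c * d = (a - c) * b + c * (b - d) from fun _ _ _ _ => by ring]
    refine add_mem ?_ ?_
    · rw [pow_succ]
      exact Ideal.mul_mem_mul hf' (taylorLift_mem_irrelevant_of_mem hbij hπ hg)
    · rw [add_assoc, pow_add]
      exact Ideal.mul_mem_mul (coe_grLift_mem_irrelevant_pow hbij hπ _)
        (taylorLift_sub_grLift_one_mem_sq hbij hπ he g hg1)

theorem taylorLift_mem_pow {m : ℕ} {f : MvPolynomial σ k} (hf : f ∈ I ^ m) :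
    taylorLift (fun j => (e j : S)) f ∈ 𝒜₊.toIdeal ^ m := by
  simpa using add_mem (Ideal.pow_le_pow_right m.le_succ
    (taylorLift_sub_grLift_mem_pow_succ hbij hπ he f hf))
    (coe_grLift_mem_irrelevant_pow hbij hπ ⟨f, hf⟩)

theorem mem_pow_of_taylorLift_mem_pow {m : ℕ} {f : MvPolynomial σ k}
    (h : taylorLift (fun j => (e j : S)) f ∈ 𝒜₊.toIdeal ^ m) : f ∈ I ^ m := by
  induction m with
  | zero => simp
  | succ m ih =>
    have hf := ih (Ideal.pow_le_pow_right m.le_succ h)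
    have hL : (grLift hbij m ⟨f, hf⟩ : S) ∈ 𝒜₊.toIdeal ^ (m + 1) := by
      simpa using sub_mem h (taylorLift_sub_grLift_mem_pow_succ hbij hπ he f hf)
    exact (grLift_eq_zero_iff hbij _).1
      (Subtype.ext (eq_zero_of_mem_irrelevant_pow_succ 𝒜 (grLift hbij m ⟨f, hf⟩).2 hL))

theorem exists_sub_taylorLift_mem_pow (m : ℕ) (s : S) :
    ∃ f : MvPolynomial σ k, s - taylorLift (fun j => (e j : S)) f ∈ 𝒜₊.toIdeal ^ m := by
  induction m with
  | zero => exact ⟨0, by simp⟩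
  | succ m ih =>
    obtain ⟨f, hf⟩ := ih
    -- correct `f` by a lift `g ∈ Iᵐ` of the degree-`m` component of the error `s - d f`
    obtain ⟨⟨g, hg⟩, hgs⟩ :=
      grLift_surjective hbij m (decompose 𝒜 (s - taylorLift (fun j => (e j : S)) f) m)
    refine ⟨f + g, ?_⟩
    have h1 := sub_coe_decompose_mem_irrelevant_pow_succ 𝒜
      (fun i x hx => mem_irrelevant_pow_of_mem hbij hπ hx) hf
    have h2 := taylorLift_sub_grLift_mem_pow_succ hbij hπ he g hg
    rw [hgs] at h2
    convert sub_mem h1 h2 using 1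
    rw [map_add]
    ring

theorem bijective_quotientMap_taylorLift (m : ℕ) :
    Function.Bijective (Ideal.quotientMap (𝒜₊.toIdeal ^ m)
      (taylorLift (k := k) fun j => (e j : S)).toRingHom
      fun _ hf => taylorLift_mem_pow hbij hπ he hf) := by
  refine ⟨Ideal.quotientMap_injective' fun _ hf => mem_pow_of_taylorLift_mem_pow hbij hπ he hf,
    fun y => ?_⟩
  obtain ⟨s, rfl⟩ := Ideal.Quotient.mk_surjective y
  obtain ⟨f, hf⟩ := exists_sub_taylorLift_mem_pow hbij hπ he m s
  exact ⟨Ideal.Quotient.mk _ f, (Ideal.Quotient.eq.2 hf).symm⟩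

end TaylorLiftOfGradedModel

/-- `S` stands for `Sym(I/I²)`, and its irrelevant ideal for the augmentation ideal `J`. -/
theorem stmt10 {k : Type*} [Field k] {n : ℕ}
    {S : Type*} [CommRing S]
    [Algebra (MvPolynomial (Fin n) k) S] [Algebra k S]
    [IsScalarTower k (MvPolynomial (Fin n) k) S]
    (I : Ideal (MvPolynomial (Fin n) k))
    [Algebra.Smooth k (MvPolynomial (Fin n) k ⧸ I)]
    (𝒜 : ℕ → Submodule (MvPolynomial (Fin n) k) S) [GradedAlgebra 𝒜]
    (π : ∀ i, 𝒜 i →ₗ[MvPolynomial (Fin n) k] Gr I i)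
    (hbij : ∀ i, Function.Bijective (π i))
    (hπ : ∀ (i j : ℕ) (x : 𝒜 i) (y : 𝒜 j) (f g : MvPolynomial (Fin n) k)
      (hf : f ∈ I ^ i) (hg : g ∈ I ^ j),
      π i x = grMk I i f hf → π j y = grMk I j g hg →
      π (i + j) ⟨(x : S) * (y : S), SetLike.mul_mem_graded x.2 y.2⟩ =
        grMk I (i + j) (f * g) (by rw [pow_add]; exact Ideal.mul_mem_mul hf hg)) :
    ∃ d : MvPolynomial (Fin n) k →ₐ[k] S,
      (∀ (m : ℕ) (a : MvPolynomial (Fin n) k), a ∈ I ^ m →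
        d a ∈ (HomogeneousIdeal.irrelevant 𝒜).toIdeal ^ m) ∧
      (∀ m : ℕ, 1 ≤ m →
        ∃ e : (MvPolynomial (Fin n) k ⧸ I ^ m) ≃+*
            (S ⧸ ((HomogeneousIdeal.irrelevant 𝒜).toIdeal ^ m)),
          ∀ a, e (Ideal.Quotient.mk (I ^ m) a) =
            Ideal.Quotient.mk ((HomogeneousIdeal.irrelevant 𝒜).toIdeal ^ m) (d a)) ∧
      ∃ ehat : AdicCompletion I (MvPolynomial (Fin n) k) ≃+*
          AdicCompletion (HomogeneousIdeal.irrelevant 𝒜).toIdeal S,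
        ∀ a : MvPolynomial (Fin n) k,
          ehat (algebraMap _ _ a) = algebraMap S _ (d a) := by
  obtain ⟨e, he⟩ := exists_coe_grLift_one_eq_sum_pderiv_smul hbij
  have hbij' := bijective_quotientMap_taylorLift hbij hπ he
  exact ⟨taylorLift fun j => (e j : S), fun m a ha => taylorLift_mem_pow hbij hπ he ha,
    fun m _ => ⟨RingEquiv.ofBijective _ (hbij' m), fun a => rfl⟩,
    AdicCompletion.exists_ringEquiv_of_bijective_quotientMap _ _ hbij'⟩
end
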